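/- The tanh-sinh transformation ψ(z) = tanh((π/2)·sinh z) is bounded on the strip D_d: for every d with 0 < d < π/2 there exists a constant M > 0 such that |ψ(z)| ≤ M for all complex z with |Im z| < d. -/

import Mathlib

/-!
Put `w = (π/2) sinh z`. Since `cosh² - sinh² = 1`, `‖tanh w‖ ≤ 1 + ‖cosh w‖⁻¹`, so it suffices to
keep `‖cosh w‖² = sinh² (Re w) + cos² (Im w)` away from `0` on the strip. For `z = x + iy` we have
`Re w = (π/2) sinh x cos y` and `Im w = (π/2) cosh x sin y`. Where `|x| ≥ δ`, `|Re w|` is at least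
`(π/2) sinh δ cos d`; where `|x| < δ`, `|Im w| ≤ (π/2) cosh δ sin d`, which stays below `π/2` for
small `δ` because `sin d < 1`.
-/

open Real Complex

namespace Complex

theorem sinh_re (w : ℂ) : (sinh w).re = Real.sinh w.re * Real.cos w.im := by
  simp only [sinh, div_ofNat_re, sub_re, exp_re, neg_re, neg_im, Real.cos_neg, Real.sinh_eq]
  ring

theorem sinh_im (w : ℂ) : (sinh w).im = Real.cosh w.re * Real.sin w.im := by
  simp only [sinh, div_ofNat_im, sub_im, exp_im, neg_re, neg_im, Real.sin_neg, Real.cosh_eq]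
  ring

theorem cosh_re (w : ℂ) : (cosh w).re = Real.cosh w.re * Real.cos w.im := by
  simp only [cosh, div_ofNat_re, add_re, exp_re, neg_re, neg_im, Real.cos_neg, Real.cosh_eq]
  ring

theorem cosh_im (w : ℂ) : (cosh w).im = Real.sinh w.re * Real.sin w.im := by
  simp only [cosh, div_ofNat_im, add_im, exp_im, neg_re, neg_im, Real.sin_neg, Real.sinh_eq]
  ring

theorem norm_cosh_sq (w : ℂ) : ‖cosh w‖ ^ 2 = Real.sinh w.re ^ 2 + Real.cos w.im ^ 2 := by
  rw [Complex.sq_norm, normSq_apply, cosh_re, cosh_im]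
  linear_combination Real.cos w.im ^ 2 * Real.cosh_sq w.re +
    Real.sinh w.re ^ 2 * Real.sin_sq_add_cos_sq w.im

theorem abs_sinh_re_le_norm_cosh (w : ℂ) : |Real.sinh w.re| ≤ ‖cosh w‖ := by
  rw [← abs_norm, ← sq_le_sq, norm_cosh_sq]
  nlinarith [sq_nonneg (Real.cos w.im)]

theorem abs_cos_im_le_norm_cosh (w : ℂ) : |Real.cos w.im| ≤ ‖cosh w‖ := by
  rw [← abs_norm, ← sq_le_sq, norm_cosh_sq]
  nlinarith [sq_nonneg (Real.sinh w.re)]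

theorem norm_sinh_le_norm_cosh_add_one (w : ℂ) : ‖sinh w‖ ≤ ‖cosh w‖ + 1 := by
  have h : ‖sinh w‖ ^ 2 ≤ (‖cosh w‖ + 1) ^ 2 :=
    calc ‖sinh w‖ ^ 2 = ‖cosh w ^ 2 - 1‖ := by rw [cosh_sq, add_sub_cancel_right, norm_pow]
      _ ≤ ‖cosh w‖ ^ 2 + 1 := (norm_sub_le _ _).trans_eq (by rw [norm_pow, norm_one])
      _ ≤ (‖cosh w‖ + 1) ^ 2 := by nlinarith [norm_nonneg (cosh w)]
  exact (pow_le_pow_iff_left₀ (norm_nonneg _) (by positivity) two_ne_zero).1 h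

theorem norm_tanh_le_one_add_inv_norm_cosh (w : ℂ) : ‖tanh w‖ ≤ 1 + ‖cosh w‖⁻¹ := by
  rw [tanh_eq_sinh_div_cosh, norm_div]
  rcases (norm_nonneg (cosh w)).eq_or_lt with h | h
  · simp [← h]
  · rw [div_le_iff₀ h, add_mul, inv_mul_cancel₀ h.ne', one_mul]
    exact norm_sinh_le_norm_cosh_add_one w

theorem sinh_le_norm_cosh_of_le_abs_re {w : ℂ} {a : ℝ} (h : a ≤ |w.re|) :
    Real.sinh a ≤ ‖cosh w‖ :=
  calc Real.sinh a ≤ Real.sinh |w.re| := Real.sinh_le_sinh.2 h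
    _ = |Real.sinh w.re| := (Real.abs_sinh _).symm
    _ ≤ ‖cosh w‖ := abs_sinh_re_le_norm_cosh w

theorem cos_le_norm_cosh_of_abs_im_le {w : ℂ} {b : ℝ} (h : |w.im| ≤ b) (hb : b ≤ π) :
    Real.cos b ≤ ‖cosh w‖ :=
  calc Real.cos b ≤ Real.cos |w.im| :=
        Real.cos_le_cos_of_nonneg_of_le_pi (abs_nonneg _) hb h
    _ = Real.cos w.im := Real.cos_abs _
    _ ≤ |Real.cos w.im| := le_abs_self _
    _ ≤ ‖cosh w‖ := abs_cos_im_le_norm_cosh w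

end Complex

open Topology in
theorem Real.exists_pos_cosh_mul_lt_one {s : ℝ} (hs : s < 1) :
    ∃ δ > 0, Real.cosh δ * s < 1 := by
  have h : ∀ᶠ δ in 𝓝 (0 : ℝ), Real.cosh δ * s < 1 :=
    (Real.continuous_cosh.mul continuous_const).continuousAt.eventually_lt continuousAt_const
      (by simpa using hs)
  obtain ⟨δ, hδ, hδ0⟩ :=
    ((h.filter_mono nhdsWithin_le_nhds).and self_mem_nhdsWithin).exists (f := 𝓝[>] 0)
  exact ⟨δ, hδ0, hδ⟩

theorem exists_pos_le_norm_cosh_half_pi_mul_sinh {d : ℝ} (hd0 : 0 < d) (hd : d < π / 2) :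
    ∃ c > 0, ∀ z : ℂ, |z.im| < d → c ≤ ‖cosh ((π / 2 : ℂ) * sinh z)‖ := by
  have hcosd : 0 < Real.cos d := Real.cos_pos_of_mem_Ioo ⟨by linarith, hd⟩
  have hsind : Real.sin d < 1 := by
    simpa using Real.sin_lt_sin_of_lt_of_le_pi_div_two (by linarith) le_rfl hd
  obtain ⟨δ, hδ, hδd⟩ := Real.exists_pos_cosh_mul_lt_one hsind
  set a := π / 2 * (Real.sinh δ * Real.cos d) with ha_def
  set b := π / 2 * (Real.cosh δ * Real.sin d) with hb_def
  have ha : 0 < a := by have := Real.sinh_pos_iff.2 hδ; positivity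
  have hb : 0 ≤ b ∧ b < π / 2 := by
    have := Real.sin_nonneg_of_nonneg_of_le_pi hd0.le (by linarith)
    exact ⟨by positivity, by simpa using mul_lt_mul_of_pos_left hδd (half_pos pi_pos)⟩
  refine ⟨min (Real.sinh a) (Real.cos b),
    lt_min (Real.sinh_pos_iff.2 ha) (Real.cos_pos_of_mem_Ioo ⟨by linarith, hb.2⟩), fun z hz => ?_⟩
  have hcos : Real.cos d ≤ Real.cos z.im := by
    rw [← Real.cos_abs z.im]
    exact Real.cos_le_cos_of_nonneg_of_le_pi (abs_nonneg _) (by linarith) hz.le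
  have hsin : |Real.sin z.im| ≤ Real.sin d := by
    rw [Real.abs_sin_eq_sin_abs_of_abs_le_pi (by linarith)]
    exact Real.sin_le_sin_of_le_of_le_pi_div_two (by linarith [abs_nonneg z.im]) hd.le hz.le
  rcases le_or_gt δ |z.re| with hx | hx
  · refine (min_le_left _ _).trans (sinh_le_norm_cosh_of_le_abs_re ?_)
    have hsinh : Real.sinh δ ≤ |Real.sinh z.re| := by
      rw [Real.abs_sinh]; exact Real.sinh_le_sinh.2 hx
    have hre : ((π / 2 : ℂ) * sinh z).re = π / 2 * (Real.sinh z.re * Real.cos z.im) := by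
      simp [sinh_re]
    rw [hre, abs_mul, abs_mul, abs_of_pos (hcosd.trans_le hcos), abs_of_pos (by positivity),
      ha_def]
    gcongr
  · refine (min_le_right _ _).trans (cos_le_norm_cosh_of_abs_im_le ?_ (by linarith))
    have hcosh : Real.cosh z.re ≤ Real.cosh δ :=
      Real.cosh_le_cosh.2 (by rw [abs_of_pos hδ]; exact hx.le)
    have him : ((π / 2 : ℂ) * sinh z).im = π / 2 * (Real.cosh z.re * Real.sin z.im) := by
      simp [sinh_im]
    rw [him, abs_mul, abs_mul, abs_of_pos (Real.cosh_pos _), abs_of_pos (by positivity), hb_def]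
    gcongr

/-- The tanh-sinh transformation `ψ(z) = tanh((π/2)·sinh z)` is bounded on the strip
`D_d = {z : |Im z| < d}` for every `0 < d < π/2`. -/
theorem tanh_sinh_bounded_on_strip (d : ℝ) (hd0 : 0 < d) (hd : d < π / 2) :
    ∃ M : ℝ, 0 < M ∧ ∀ z : ℂ, |z.im| < d →
      ‖Complex.tanh ((π / 2 : ℂ) * Complex.sinh z)‖ ≤ M := by
  obtain ⟨c, hc, hcosh⟩ := exists_pos_le_norm_cosh_half_pi_mul_sinh hd0 hd
  refine ⟨1 + c⁻¹, by positivity, fun z hz => ?_⟩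
  calc ‖tanh ((π / 2 : ℂ) * sinh z)‖ ≤ 1 + ‖cosh ((π / 2 : ℂ) * sinh z)‖⁻¹ :=
        norm_tanh_le_one_add_inv_norm_cosh _
    _ ≤ 1 + c⁻¹ := by gcongr; exact hcosh z hz
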